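/- Adiabatic theorem on a decaying spectral block: under the spectral hypotheses on B, assume M ≥ 1 satisfies ‖exp(tB)‖ ≤ M for all t ≥ 0, and fix an index ℓ with Re(b_ℓ) < 0. Let d be such that N_ℓ^d = 0 and set p_ℓ(s) = Σ_{k=0}^{d−1} (s^k/k!)·‖N_ℓ^k P_ℓ‖. Then for every γ > 0 and every t ≥ 0: ‖exp(t(γB + C))·P_ℓ − exp(tγB)·P_ℓ‖ ≤ (1/γ) · M·‖C‖·e^{t·M·‖C‖} · ∫₀^∞ e^{s·Re(b_ℓ)} p_ℓ(s) ds. -/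

import Mathlib

/-!
Duhamel's formula writes the difference as `∫₀ᵗ e^{(t-s)(γB+C)} C e^{sγB} P_ℓ ds`. The perturbed
semigroup grows at most like `M e^{sM‖C‖}` (Duhamel once more, then Grönwall). On the range of
`P_ℓ` the operator `B` acts as `b_ℓ + N_ℓ`, so `e^{sB} P_ℓ = e^{s b_ℓ} ∑_{k<d} s^k/k! N_ℓ^k P_ℓ`,
which decays since `Re b_ℓ < 0`. The substitution `u = γ s` turns `∫₀ᵗ` into `γ⁻¹ ∫₀^{γt}`, which is
bounded by `γ⁻¹ ∫₀^∞`.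
-/

attribute [local instance] Matrix.linftyOpNormedRing Matrix.linftyOpNormedAlgebra

open NormedSpace Finset

noncomputable section

open MeasureTheory Set
open scoped Nat

theorem le_mul_exp_of_le_add_mul_integral {g : ℝ → ℝ} {M K t : ℝ} (hg : Continuous g)
    (hK : 0 ≤ K) (ht : 0 ≤ t) (hle : ∀ u ∈ Icc 0 t, g u ≤ M + K * ∫ s in 0..u, g s) :
    g t ≤ M * Real.exp (K * t) := by
  -- Grönwall's differential inequality for the right-hand side `H`, since `H' = K g ≤ K H`.
  set H : ℝ → ℝ := fun u => M + K * ∫ s in 0..u, g s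
  have hH : ∀ u, HasDerivAt H (K * g u) u := fun u =>
    ((hg.integral_hasStrictDerivAt 0 u).hasDerivAt.const_mul K).const_add M
  have hHt := le_gronwallBound_of_liminf_deriv_right_le (δ := M) (ε := 0)
    (fun u _ => (hH u).continuousAt.continuousWithinAt)
    (fun u _ _ hr => (hH u).hasDerivWithinAt.liminf_right_slope_le hr)
    (by simp [H]) (fun u hu => by
      simpa using mul_le_mul_of_nonneg_left (hle u (Ico_subset_Icc_self hu)) hK) t ⟨ht, le_rfl⟩
  calc g t ≤ H t := hle t ⟨ht, le_rfl⟩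
    _ ≤ M * Real.exp (K * t) := by simpa [gronwallBound_ε0] using hHt

theorem intervalIntegral_le_integral_Ioi {f : ℝ → ℝ} {a b : ℝ} (hab : a ≤ b)
    (hf : IntegrableOn f (Ioi a)) (hf₀ : ∀ x ∈ Ioi a, 0 ≤ f x) :
    ∫ x in a..b, f x ≤ ∫ x in Ioi a, f x := by
  rw [intervalIntegral.integral_of_le hab]
  exact setIntegral_mono_set hf ((ae_restrict_iff' measurableSet_Ioi).2 (ae_of_all _ hf₀))
    Ioc_subset_Ioi_self.eventuallyLE

theorem integrableOn_pow_mul_exp_mul_Ioi {a : ℝ} (ha : a < 0) (k : ℕ) :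
    IntegrableOn (fun s : ℝ => s ^ k * Real.exp (s * a)) (Ioi 0) := by
  refine (integrableOn_rpow_mul_exp_neg_mul_rpow (s := k) (p := 1) (b := -a)
    (by linarith [k.cast_nonneg (α := ℝ)]) one_pos (by linarith)).congr_fun
    (fun s _ => ?_) measurableSet_Ioi
  simp [mul_comm]

theorem integrableOn_exp_mul_mul_sum_pow {a : ℝ} (ha : a < 0) (d : ℕ) (w : ℕ → ℝ) :
    IntegrableOn (fun s : ℝ => Real.exp (s * a) * ∑ k ∈ range d, s ^ k / k ! * w k) (Ioi 0) := by
  have hsum : (fun s : ℝ => Real.exp (s * a) * ∑ k ∈ range d, s ^ k / k ! * w k) =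
      fun s => ∑ k ∈ range d, w k / k ! * (s ^ k * Real.exp (s * a)) := by
    ext s
    rw [mul_sum]
    exact sum_congr rfl fun k _ => by ring
  rw [hsum]
  exact integrable_finsetSum _ fun k _ => (integrableOn_pow_mul_exp_mul_Ioi ha k).const_mul _

section RealAlgebra

variable {𝔸 : Type*} [NormedRing 𝔸] [NormedAlgebra ℝ 𝔸] [CompleteSpace 𝔸]

@[fun_prop]
theorem Continuous.exp_smul_const {X : Type*} [TopologicalSpace X] {f : X → ℝ} (hf : Continuous f)
    (A : 𝔸) : Continuous fun x => exp (f x • A) :=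
  (differentiable_exp_smul_const ℝ A).continuous.comp hf

theorem exp_smul_mul_sub_exp_smul_mul_eq_integral (A₁ A₂ p : 𝔸) (t : ℝ) :
    exp (t • A₂) * p - exp (t • A₁) * p =
      ∫ s in 0..t, exp ((t - s) • A₂) * (A₂ - A₁) * exp (s • A₁) * p := by
  have hF : ∀ s : ℝ, HasDerivAt (fun s : ℝ => -(exp ((t - s) • A₂) * exp (s • A₁) * p))
      (exp ((t - s) • A₂) * (A₂ - A₁) * exp (s • A₁) * p) s := by
    intro s
    have h₂ : HasDerivAt (fun s : ℝ => exp ((t - s) • A₂))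
        ((-1 : ℝ) • (exp ((t - s) • A₂) * A₂)) s :=
      (hasDerivAt_exp_smul_const A₂ (t - s)).scomp s ((hasDerivAt_id s).const_sub t)
    refine ((h₂.mul (hasDerivAt_exp_smul_const' A₁ s)).mul_const p).neg.congr_deriv ?_
    rw [neg_one_smul]
    noncomm_ring
  rw [intervalIntegral.integral_eq_sub_of_hasDerivAt (fun s _ => hF s)
    (Continuous.intervalIntegrable (by fun_prop) _ _)]
  simp only [sub_self, sub_zero, zero_smul, exp_zero, one_mul, mul_one]
  abel

theorem norm_exp_smul_add_le {A : 𝔸} {M : ℝ} (hA : ∀ u : ℝ, 0 ≤ u → ‖exp (u • A)‖ ≤ M)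
    (D : 𝔸) {t : ℝ} (ht : 0 ≤ t) : ‖exp (t • (A + D))‖ ≤ M * Real.exp (t * (M * ‖D‖)) := by
  have hM : 0 ≤ M := (norm_nonneg _).trans (hA 0 le_rfl)
  have hg : Continuous fun u : ℝ => ‖exp (u • (A + D))‖ := by fun_prop
  rw [mul_comm t]
  refine le_mul_exp_of_le_add_mul_integral hg (by positivity) ht fun u hu => ?_
  have hduhamel := exp_smul_mul_sub_exp_smul_mul_eq_integral (A + D) A 1 u
  rw [sub_eq_iff_eq_add', ← sub_eq_iff_eq_add] at hduhamel
  rw [← intervalIntegral.integral_const_mul, ← mul_one (exp (u • (A + D))), ← hduhamel]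
  refine (norm_sub_le _ _).trans (add_le_add (by simpa using hA u hu.1) ?_)
  refine intervalIntegral.norm_integral_le_of_norm_le hu.1 (ae_of_all _ fun s hs => ?_)
    ((continuous_const.mul hg).intervalIntegrable _ _)
  calc ‖exp ((u - s) • A) * (A - (A + D)) * exp (s • (A + D)) * 1‖
      ≤ ‖exp ((u - s) • A)‖ * ‖D‖ * ‖exp (s • (A + D))‖ := by
        simpa only [mul_one, sub_add_cancel_left, norm_neg] using
          norm_mul₃_le (a := exp ((u - s) • A)) (b := -D) (c := exp (s • (A + D)))
    _ ≤ M * ‖D‖ * ‖exp (s • (A + D))‖ := by gcongr; exact hA _ (by linarith [hs.2])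

theorem norm_exp_smul_add_mul_sub_le {A : 𝔸} {M : ℝ} (hA : ∀ u : ℝ, 0 ≤ u → ‖exp (u • A)‖ ≤ M)
    (D p : 𝔸) {f : ℝ → ℝ} (hf : ∀ u : ℝ, 0 ≤ u → ‖exp (u • A) * p‖ ≤ f u) {t : ℝ} (ht : 0 ≤ t)
    (hft : IntervalIntegrable f volume 0 t) :
    ‖exp (t • (A + D)) * p - exp (t • A) * p‖ ≤
      M * ‖D‖ * Real.exp (t * (M * ‖D‖)) * ∫ s in 0..t, f s := by
  have hM : 0 ≤ M := (norm_nonneg _).trans (hA 0 le_rfl)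
  rw [exp_smul_mul_sub_exp_smul_mul_eq_integral, ← intervalIntegral.integral_const_mul]
  refine intervalIntegral.norm_integral_le_of_norm_le ht (ae_of_all _ fun s hs => ?_)
    (hft.const_mul _)
  have hgrowth : ‖exp ((t - s) • (A + D))‖ ≤ M * Real.exp (t * (M * ‖D‖)) := by
    refine (norm_exp_smul_add_le hA D (by linarith [hs.2])).trans ?_
    gcongr
    linarith [hs.1]
  calc ‖exp ((t - s) • (A + D)) * (A + D - A) * exp (s • A) * p‖
      ≤ ‖exp ((t - s) • (A + D))‖ * ‖D‖ * ‖exp (s • A) * p‖ := by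
        simpa only [add_sub_cancel_left, mul_assoc] using
          norm_mul₃_le (a := exp ((t - s) • (A + D))) (b := D) (c := exp (s • A) * p)
    _ ≤ M * Real.exp (t * (M * ‖D‖)) * ‖D‖ * f s := by
        gcongr
        exact hf s hs.1.le
    _ = M * ‖D‖ * Real.exp (t * (M * ‖D‖)) * f s := by ring

theorem norm_exp_smul_smul_add_mul_sub_le {A : 𝔸} {M : ℝ}
    (hA : ∀ u : ℝ, 0 ≤ u → ‖exp (u • A)‖ ≤ M) (D p : 𝔸) {f : ℝ → ℝ}
    (hf : ∀ u : ℝ, 0 ≤ u → ‖exp (u • A) * p‖ ≤ f u) (hfi : IntegrableOn f (Ioi 0))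
    {γ : ℝ} (hγ : 0 < γ) {t : ℝ} (ht : 0 ≤ t) :
    ‖exp (t • (γ • A + D)) * p - exp ((t * γ) • A) * p‖ ≤
      (1 / γ) * (M * ‖D‖ * Real.exp (t * (M * ‖D‖))) * ∫ s in Ioi 0, f s := by
  have hM : 0 ≤ M := (norm_nonneg _).trans (hA 0 le_rfl)
  have hf₀ : ∀ x ∈ Ioi (0 : ℝ), 0 ≤ f x := fun x hx => (norm_nonneg _).trans (hf x (le_of_lt hx))
  have hfγt : IntervalIntegrable f volume 0 (γ * t) :=
    (intervalIntegrable_iff_integrableOn_Ioc_of_le (by positivity)).2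
      (hfi.mono_set Ioc_subset_Ioi_self)
  have hscaled := norm_exp_smul_add_mul_sub_le (A := γ • A) (f := fun s => f (γ * s))
    (fun u hu => by rw [smul_smul]; exact hA _ (by positivity)) D p
    (fun u hu => by rw [smul_smul, mul_comm]; exact hf _ (by positivity)) ht
    (by simpa [hγ.ne'] using hfγt.comp_mul_left (c := γ))
  rw [smul_smul, intervalIntegral.integral_comp_mul_left f hγ.ne', mul_zero, smul_eq_mul]
    at hscaled
  calc _ ≤ _ := hscaled
    _ ≤ M * ‖D‖ * Real.exp (t * (M * ‖D‖)) * (γ⁻¹ * ∫ s in Ioi 0, f s) := by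
        gcongr
        exact intervalIntegral_le_integral_Ioi (by positivity) hfi hf₀
    _ = _ := by ring

end RealAlgebra

theorem pow_mul_eq_pow_mul_of_mul_eq {M : Type*} [Monoid M] {a e p : M} (h : a * p = e * p)
    (he : Commute e p) (k : ℕ) : a ^ k * p = e ^ k * p := by
  induction k with
  | zero => rw [pow_zero, pow_zero]
  | succ k ih =>
    rw [pow_succ, mul_assoc, h, he.eq, ← mul_assoc, ih, mul_assoc, ← he.eq, ← mul_assoc, ← pow_succ]

section ComplexAlgebra

variable {𝔹 : Type*} [NormedRing 𝔹] [NormedAlgebra ℂ 𝔹]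

theorem exp_eq_sum_of_pow_eq_zero {N : 𝔹} {d : ℕ} (hN : N ^ d = 0) :
    exp N = ∑ k ∈ range d, (k !⁻¹ : ℂ) • N ^ k := by
  rw [exp_eq_tsum ℂ]
  refine tsum_eq_sum fun k hk => ?_
  rw [pow_eq_zero_of_le (by simpa using hk) hN, smul_zero]

variable [CompleteSpace 𝔹]

theorem exp_mul_eq_exp_mul_of_mul_eq {a e p : 𝔹} (h : a * p = e * p) (he : Commute e p) :
    exp a * p = exp e * p :=
  ((exp_series_hasSum_exp' (𝕂 := ℂ) a).mul_right p).unique <| by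
    simpa only [smul_mul_assoc, pow_mul_eq_pow_mul_of_mul_eq h he] using
      (exp_series_hasSum_exp' (𝕂 := ℂ) e).mul_right p

theorem exp_smul_one_add_of_pow_eq_zero (c : ℂ) {N : 𝔹} {d : ℕ} (hN : N ^ d = 0) :
    exp (c • 1 + N) = Complex.exp c • ∑ k ∈ range d, (k !⁻¹ : ℂ) • N ^ k := by
  have hball : ∀ x : 𝔹, x ∈ Metric.eball (0 : 𝔹) (expSeries ℂ 𝔹).radius := fun x =>
    (expSeries_radius_eq_top ℂ 𝔹).symm ▸ edist_lt_top _ _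
  rw [exp_add_of_commute_of_mem_ball ((Commute.one_left N).smul_left c) (hball _) (hball _),
    exp_eq_sum_of_pow_eq_zero hN, ← Algebra.algebraMap_eq_smul_one, ← algebraMap_exp_comm,
    ← Complex.exp_eq_exp_ℂ, Algebra.algebraMap_eq_smul_one, smul_one_mul]

theorem norm_exp_ofReal_smul_smul_one_add_mul_le (c : ℂ) {N : 𝔹} {d : ℕ} (hN : N ^ d = 0)
    (p : 𝔹) {u : ℝ} (hu : 0 ≤ u) :
    ‖exp ((u : ℂ) • (c • 1 + N)) * p‖ ≤
      Real.exp (u * c.re) * ∑ k ∈ range d, u ^ k / k ! * ‖N ^ k * p‖ := by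
  have huN : ((u : ℂ) • N) ^ d = 0 := by rw [smul_pow, hN, smul_zero]
  rw [smul_add, smul_smul, exp_smul_one_add_of_pow_eq_zero _ huN, smul_mul_assoc, norm_smul,
    Complex.norm_exp, Complex.re_ofReal_mul, sum_mul]
  gcongr
  refine (norm_sum_le _ _).trans_eq (sum_congr rfl fun k _ => ?_)
  rw [smul_pow, smul_mul_assoc, smul_mul_assoc, norm_smul, norm_smul, norm_inv, norm_pow,
    Complex.norm_real, Real.norm_of_nonneg hu, Complex.norm_natCast]
  ring

end ComplexAlgebra

section SpectralBlock

variable {𝔹 : Type*} [NormedRing 𝔹] [NormedAlgebra ℂ 𝔹] {ι : Type*} [Fintype ι] [DecidableEq ι]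
  {B : 𝔹} {b : ι → ℂ} {P N : ι → 𝔹}

theorem mul_spectralProjection_eq (hPP : ∀ k l, P k * P l = if k = l then P k else 0)
    (hNP : ∀ k l, N l * P k = if k = l then N k else 0) (hB : B = ∑ k, (b k • P k + N k))
    (ℓ : ι) : B * P ℓ = b ℓ • P ℓ + N ℓ := by
  simp [hB, sum_mul, add_mul, hPP, hNP, sum_add_distrib, eq_comm (a := ℓ)]

theorem norm_exp_ofReal_smul_mul_spectralProjection_le [CompleteSpace 𝔹]
    (hPP : ∀ k l, P k * P l = if k = l then P k else 0)
    (hPN : ∀ k l, P k * N l = if k = l then N k else 0)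
    (hNP : ∀ k l, N l * P k = if k = l then N k else 0) (hB : B = ∑ k, (b k • P k + N k))
    (ℓ : ι) {d : ℕ} (hd : N ℓ ^ d = 0) {u : ℝ} (hu : 0 ≤ u) :
    ‖exp ((u : ℂ) • B) * P ℓ‖ ≤
      Real.exp (u * (b ℓ).re) * ∑ k ∈ range d, u ^ k / k ! * ‖N ℓ ^ k * P ℓ‖ := by
  have hEP : (b ℓ • 1 + N ℓ) * P ℓ = b ℓ • P ℓ + N ℓ := by
    rw [add_mul, smul_one_mul, hNP, if_pos rfl]
  have hPE : P ℓ * (b ℓ • 1 + N ℓ) = b ℓ • P ℓ + N ℓ := by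
    rw [mul_add, mul_smul_one, hPN, if_pos rfl]
  rw [exp_mul_eq_exp_mul_of_mul_eq (e := (u : ℂ) • (b ℓ • 1 + N ℓ))
    (by rw [smul_mul_assoc, smul_mul_assoc, mul_spectralProjection_eq hPP hNP hB, hEP])
    (Commute.smul_left (hEP.trans hPE.symm) _)]
  exact norm_exp_ofReal_smul_smul_one_add_mul_le _ hd _ hu

end SpectralBlock

theorem adiabatic_decaying_block_general
    {n m : ℕ}
    (B C : Matrix (Fin n) (Fin n) ℂ)
    (b : Fin m → ℂ)
    (P N : Fin m → Matrix (Fin n) (Fin n) ℂ)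
    (hPP : ∀ k l, P k * P l = if k = l then P k else 0)
    (hPN : ∀ k l, P k * N l = if k = l then N k else 0)
    (hNP : ∀ k l, N l * P k = if k = l then N k else 0)
    (hB : B = ∑ k, (b k • P k + N k))
    (M : ℝ)
    (hMbound : ∀ t : ℝ, 0 ≤ t → ‖exp (t • B)‖ ≤ M)
    (ℓ : Fin m) (hℓ : (b ℓ).re < 0)
    (d : ℕ) (hd : N ℓ ^ d = 0) :
    ∀ γ : ℝ, 0 < γ → ∀ t : ℝ, 0 ≤ t →
      ‖exp (t • ((γ : ℂ) • B + C)) * P ℓ - exp ((t * γ : ℂ) • B) * P ℓ‖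
        ≤ (1 / γ) * (M * ‖C‖ * Real.exp (t * (M * ‖C‖))) *
            ∫ s in Set.Ioi (0 : ℝ), Real.exp (s * (b ℓ).re) *
              ∑ k ∈ range d, s ^ k / (Nat.factorial k : ℝ) * ‖N ℓ ^ k * P ℓ‖ := by
  intro γ hγ t ht
  have hblock : ∀ u : ℝ, 0 ≤ u → ‖exp (u • B) * P ℓ‖ ≤
      Real.exp (u * (b ℓ).re) * ∑ k ∈ range d, u ^ k / k ! * ‖N ℓ ^ k * P ℓ‖ := fun u hu => by
    rw [← Complex.coe_smul]
    exact norm_exp_ofReal_smul_mul_spectralProjection_le hPP hPN hNP hB ℓ hd hu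
  rw [Complex.coe_smul, ← Complex.ofReal_mul, Complex.coe_smul]
  exact norm_exp_smul_smul_add_mul_sub_le hMbound C (P ℓ) hblock
    (integrableOn_exp_mul_mul_sum_pow hℓ d _) hγ ht

/-- Adiabatic theorem on a decaying spectral block. -/
theorem adiabatic_decaying_block
    {n m : ℕ} (hn : 1 ≤ n) (hm : 1 ≤ m)
    (B C : Matrix (Fin n) (Fin n) ℂ)
    (b : Fin m → ℂ) (hb : Function.Injective b)
    (P N : Fin m → Matrix (Fin n) (Fin n) ℂ)
    (hPP : ∀ k l, P k * P l = if k = l then P k else 0)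
    (hPsum : ∑ k, P k = 1)
    (hPN : ∀ k l, P k * N l = if k = l then N k else 0)
    (hNP : ∀ k l, N l * P k = if k = l then N k else 0)
    (hNnil : ∀ k, IsNilpotent (N k))
    (hB : B = ∑ k, (b k • P k + N k))
    (hRe : ∀ k, (b k).re ≤ 0)
    (hsemi : ∀ k, (b k).re = 0 → N k = 0)
    (M : ℝ) (hM : 1 ≤ M)
    (hMbound : ∀ t : ℝ, 0 ≤ t → ‖exp (t • B)‖ ≤ M)
    (ℓ : Fin m) (hℓ : (b ℓ).re < 0)
    (d : ℕ) (hd : N ℓ ^ d = 0) :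
    ∀ γ : ℝ, 0 < γ → ∀ t : ℝ, 0 ≤ t →
      ‖exp (t • ((γ : ℂ) • B + C)) * P ℓ - exp ((t * γ : ℂ) • B) * P ℓ‖
        ≤ (1 / γ) * (M * ‖C‖ * Real.exp (t * (M * ‖C‖))) *
            ∫ s in Set.Ioi (0 : ℝ), Real.exp (s * (b ℓ).re) *
              ∑ k ∈ range d, s ^ k / (Nat.factorial k : ℝ) * ‖N ℓ ^ k * P ℓ‖ :=
  adiabatic_decaying_block_general B C b P N hPP hPN hNP hB M hMbound ℓ hℓ d hd
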